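/- arXiv:2412.04808 — 2 statements merged into one kernel-verified Lean document; each statement's English description precedes it below -/
import Mathlib

section
/- Let φ : [0,1) → (0,∞) be a smoothly increasing function such that 1/φ is convex, let k be a positive integer, and let f be a harmonic mapping on the open unit disk 𝔻. If f is φ-normal, then sup{ f^{#(k)}(z)/φ(|z|)^k : z ∈ 𝔻 } < ∞. -/
open Complex Metric Set Filter ComplexConjugate

/-- Spherical derivative of the harmonic mapping `f = h + conj g`. -/
noncomputable def sphDeriv (h g : ℂ → ℂ) (z : ℂ) : ℝ :=
  (‖deriv h z‖ + ‖deriv g z‖) / (1 + ‖h z + conj (g z)‖ ^ 2)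

/-- Extended spherical derivative of order `k` of the harmonic mapping `f = h + conj g`. -/
noncomputable def sphDerivK (k : ℕ) (h g : ℂ → ℂ) (z : ℂ) : ℝ :=
  (‖iteratedDeriv k h z‖ + ‖iteratedDeriv k g z‖) / (1 + ‖h z + conj (g z)‖ ^ (k + 1))

/-- `φ : [0,1) → (0,∞)` is smoothly increasing: `φ(r)(1-r) → ∞` as `r → 1⁻` and
`φ(|a + z/φ(|a|)|)/φ(|a|) → 1` as `|a| → 1⁻`, uniformly on compact subsets of `ℂ`. -/
def SmoothlyIncreasing (φ : ℝ → ℝ) : Prop :=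
  (∀ r ∈ Set.Ico (0 : ℝ) 1, 0 < φ r) ∧
  Tendsto (fun r : ℝ => φ r * (1 - r)) (nhdsWithin 1 (Set.Iio 1)) atTop ∧
  ∀ K : Set ℂ, IsCompact K →
    TendstoUniformlyOn (fun (a : ℂ) (z : ℂ) => φ ‖a + z / (φ ‖a‖ : ℂ)‖ / φ ‖a‖)
      (fun _ => 1) (Filter.comap (fun a : ℂ => ‖a‖) (nhdsWithin 1 (Set.Iio 1))) K

open Topology

/-!
Write `f = h + conj g`. The function `(1 + |f|²)^(-1/2)` has gradient at most `f^#`, so where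
`f^# ≤ B` it is `B`-Lipschitz. Starting from a point `a` with `s = √(1 + |f(a)|²)`, on the disc of
radius `1/(2Bs)` about `a` the quantity `1 + |f|²` therefore stays below `4 s²`, hence
`|h'| + |g'| ≤ 4 B s²` there, and Cauchy's estimate for `h'`, `g'` on that disc bounds
`f^{#(k)}(a)` by a constant times `B^k`.

Near the boundary, `φ`-normality gives `f^# ≤ C φ(|w|)`, and the two conditions defining a
smoothly increasing `φ` say that the disc of radius `1/φ(|a|)` about `a` lies in `𝔻` and that
`φ(|w|) ≤ 2 φ(|a|)` on it; so `B = 2 C φ(|a|)` works and `f^{#(k)}(a) ≲ φ(|a|)^k`. On a compact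
disc `|a| ≤ r₀`, the numerator of `f^{#(k)}` is bounded, and convexity of `1/φ` bounds `φ` from
below.
-/

section ChordalWeight

variable {E G : Type*} [NormedAddCommGroup E] [InnerProductSpace ℝ E]
  [NormedAddCommGroup G] [NormedSpace ℝ G]

lemma exists_hasFDerivAt_inv_sqrt_one_add_norm_sq (x : E) :
    ∃ D : E →L[ℝ] ℝ, HasFDerivAt (fun y => (√(1 + ‖y‖ ^ 2))⁻¹) D x ∧
      ‖D‖ ≤ (1 + ‖x‖ ^ 2)⁻¹ := by
  set s := √(1 + ‖x‖ ^ 2)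
  have hq : 0 < 1 + ‖x‖ ^ 2 := by positivity
  have hs : 0 < s := Real.sqrt_pos.2 hq
  have hs2 : s ^ 2 = 1 + ‖x‖ ^ 2 := Real.sq_sqrt hq.le
  have hxs : ‖x‖ ≤ s := Real.le_sqrt_of_sq_le (by linarith)
  have hinv : HasDerivAt (fun t => (√t)⁻¹) (-(1 / (2 * s)) / s ^ 2) (1 + ‖x‖ ^ 2) :=
    (Real.hasDerivAt_sqrt hq.ne').inv hs.ne'
  refine ⟨_, hinv.comp_hasFDerivAt (f := fun y : E => 1 + ‖y‖ ^ 2) x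
    ((hasStrictFDerivAt_norm_sq x).hasFDerivAt.const_add 1), ?_⟩
  calc ‖(-(1 / (2 * s)) / s ^ 2) • (2 • innerSL ℝ x)‖ = ‖x‖ / s * (s ^ 2)⁻¹ := by
        rw [two_nsmul, ← two_smul ℝ, norm_smul, norm_smul, innerSL_apply_norm]
        simp only [one_div, mul_inv_rev, norm_div, norm_neg, norm_mul, norm_inv, Real.norm_eq_abs,
          abs_of_pos hs, norm_pow]
        field_simp
    _ ≤ 1 * (s ^ 2)⁻¹ := by gcongr; exact div_le_one_of_le₀ hxs hs.le
    _ = (1 + ‖x‖ ^ 2)⁻¹ := by rw [one_mul, hs2]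

lemma abs_inv_sqrt_one_add_norm_sq_sub_le {F : G → E} {F' : G → G →L[ℝ] E} {s : Set G}
    {L : ℝ} (hs : Convex ℝ s) (hF : ∀ w ∈ s, HasFDerivAt F (F' w) w)
    (hL : ∀ w ∈ s, ‖F' w‖ / (1 + ‖F w‖ ^ 2) ≤ L) {x y : G} (hx : x ∈ s) (hy : y ∈ s) :
    |(√(1 + ‖F y‖ ^ 2))⁻¹ - (√(1 + ‖F x‖ ^ 2))⁻¹| ≤ L * ‖y - x‖ := by
  have hderiv : ∀ w ∈ s, ∃ D : G →L[ℝ] ℝ,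
      HasFDerivAt (fun z => (√(1 + ‖F z‖ ^ 2))⁻¹) D w ∧ ‖D‖ ≤ L := by
    intro w hw
    obtain ⟨D, hD, hDn⟩ := exists_hasFDerivAt_inv_sqrt_one_add_norm_sq (F w)
    refine ⟨D.comp (F' w), hD.comp w (hF w hw), ?_⟩
    calc ‖D.comp (F' w)‖ ≤ ‖D‖ * ‖F' w‖ := D.opNorm_comp_le _
      _ ≤ (1 + ‖F w‖ ^ 2)⁻¹ * ‖F' w‖ := by gcongr
      _ ≤ L := by rw [inv_mul_eq_div]; exact hL w hw
  choose! D hD hDn using hderiv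
  exact hs.norm_image_sub_le_of_norm_hasFDerivWithin_le
    (fun w hw => (hD w hw).hasFDerivWithinAt) hDn hx hy

end ChordalWeight

lemma pow_sqrt_one_add_sq_le {x : ℝ} (hx : 0 ≤ x) (n : ℕ) :
    √(1 + x ^ 2) ^ n ≤ 2 ^ n * (1 + x ^ n) := by
  have hs : √(1 + x ^ 2) ≤ 2 * max 1 x :=
    Real.sqrt_le_left (by positivity) |>.2 (by
      rcases le_total x 1 with hx1 | hx1
      · rw [max_eq_left hx1]; nlinarith
      · rw [max_eq_right hx1]; nlinarith)
  have hmax : max 1 x ^ n ≤ 1 + x ^ n := by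
    rcases le_total x 1 with hx1 | hx1
    · rw [max_eq_left hx1, one_pow]; linarith [pow_nonneg hx n]
    · rw [max_eq_right hx1]; linarith
  calc √(1 + x ^ 2) ^ n ≤ (2 * max 1 x) ^ n := by gcongr
    _ ≤ 2 ^ n * (1 + x ^ n) := by rw [mul_pow]; gcongr

lemma min_le_of_convexOn_inv {φ : ℝ → ℝ} {s : Set ℝ} (hconv : ConvexOn ℝ s fun r => (φ r)⁻¹)
    (hpos : ∀ r ∈ s, 0 < φ r) {x y t : ℝ} (hx : x ∈ s) (hy : y ∈ s) (ht : t ∈ segment ℝ x y) :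
    min (φ x) (φ y) ≤ φ t := by
  have hts : t ∈ s := hconv.1.segment_subset hx hy ht
  have hmin : 0 < min (φ x) (φ y) := lt_min (hpos x hx) (hpos y hy)
  rw [← inv_le_inv₀ (hpos t hts) hmin]
  exact (hconv.le_on_segment hx hy ht).trans <|
    max_le (inv_anti₀ hmin (min_le_left _ _)) (inv_anti₀ hmin (min_le_right _ _))

lemma exists_forall_of_eventually_comap_norm {P : ℂ → Prop}
    (hP : ∀ᶠ a in comap (fun a : ℂ => ‖a‖) (𝓝[<] 1), P a) :
    ∃ r ∈ Ico (0 : ℝ) 1, ∀ a : ℂ, r < ‖a‖ → ‖a‖ < 1 → P a := by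
  obtain ⟨r, hr, hrP⟩ := mem_nhdsLT_iff_exists_Ioo_subset.1 (eventually_comap.1 hP)
  exact ⟨max r 0, ⟨le_max_right r 0, max_lt hr one_pos⟩,
    fun a har ha1 => hrP ⟨(le_max_left r 0).trans_lt har, ha1⟩ a rfl⟩

namespace SmoothlyIncreasing

variable {φ : ℝ → ℝ}

lemma eventually_ball_subset (hφ : SmoothlyIncreasing φ) :
    ∀ᶠ a in comap (fun a : ℂ => ‖a‖) (𝓝[<] 1), ball a (φ ‖a‖)⁻¹ ⊆ ball 0 1 := by
  have hlt : ∀ᶠ r in 𝓝[<] (1 : ℝ), r < 1 := self_mem_nhdsWithin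
  filter_upwards [(hlt.and (hφ.2.1.eventually_ge_atTop 1)).comap _] with a ⟨ha1, haφ⟩ w hw
  have hφa : 0 < φ ‖a‖ := hφ.1 _ ⟨norm_nonneg a, ha1⟩
  have hrad : (φ ‖a‖)⁻¹ ≤ 1 - ‖a‖ := by
    rw [inv_le_iff_one_le_mul₀ hφa]; linarith
  rw [mem_ball_zero_iff]
  calc ‖w‖ ≤ ‖w - a‖ + ‖a‖ := norm_le_norm_sub_add w a
    _ < 1 := by linarith [mem_ball_iff_norm.1 hw]

lemma eventually_le_two_mul (hφ : SmoothlyIncreasing φ) :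
    ∀ᶠ a in comap (fun a : ℂ => ‖a‖) (𝓝[<] 1), ∀ w ∈ ball a (φ ‖a‖)⁻¹, φ ‖w‖ ≤ 2 * φ ‖a‖ := by
  have hlt : ∀ᶠ r in 𝓝[<] (1 : ℝ), r < 1 := self_mem_nhdsWithin
  have hunif := Metric.tendstoUniformlyOn_iff.1 (hφ.2.2 _ (isCompact_closedBall 0 1)) 1 one_pos
  filter_upwards [hlt.comap _, hunif] with a ha1 hclose w hw
  have hφa : 0 < φ ‖a‖ := hφ.1 _ ⟨norm_nonneg a, ha1⟩
  have hz : (w - a) * (φ ‖a‖ : ℂ) ∈ closedBall (0 : ℂ) 1 := by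
    rw [mem_closedBall_zero_iff, norm_mul, norm_real, Real.norm_of_nonneg hφa.le,
      ← le_div_iff₀ hφa, one_div]
    exact (mem_ball_iff_norm.1 hw).le
  have hclose_w := hclose _ hz
  rw [mul_div_cancel_right₀ _ (ofReal_ne_zero.2 hφa.ne'), add_sub_cancel, Real.dist_eq,
    abs_lt] at hclose_w
  exact ((div_lt_iff₀ hφa).1 (by linarith [hclose_w.1])).le

end SmoothlyIncreasing

section HarmonicMapping

variable {h g : ℂ → ℂ} {U : Set ℂ} {a : ℂ} {ρ B : ℝ}

lemma exists_hasFDerivAt_add_conj {w : ℂ} (hh : DifferentiableAt ℂ h w)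
    (hg : DifferentiableAt ℂ g w) :
    ∃ D : ℂ →L[ℝ] ℂ, HasFDerivAt (fun z => h z + conj (g z)) D w ∧
      ‖D‖ ≤ ‖deriv h w‖ + ‖deriv g w‖ := by
  have Dh := hh.hasDerivAt.hasFDerivAt.restrictScalars ℝ
  have Dg := conjCLE.toContinuousLinearMap.hasFDerivAt.comp w
    (hg.hasDerivAt.hasFDerivAt.restrictScalars ℝ)
  refine ⟨_, Dh.add Dg, ContinuousLinearMap.opNorm_le_bound _ (by positivity) fun u => ?_⟩
  calc ‖u * deriv h w + conj (u * deriv g w)‖ ≤ ‖u * deriv h w‖ + ‖conj (u * deriv g w)‖ :=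
        norm_add_le _ _
    _ = (‖deriv h w‖ + ‖deriv g w‖) * ‖u‖ := by simp only [RCLike.norm_conj, norm_mul]; ring

lemma sphDeriv_nonneg {z : ℂ} : 0 ≤ sphDeriv h g z := by
  unfold sphDeriv; positivity

lemma sphDerivK_nonneg {k : ℕ} {z : ℂ} : 0 ≤ sphDerivK k h g z := by
  unfold sphDerivK; positivity

lemma one_add_norm_sq_le_of_sphDeriv_le (hh : ∀ w ∈ closedBall a ρ, DifferentiableAt ℂ h w)
    (hg : ∀ w ∈ closedBall a ρ, DifferentiableAt ℂ g w)
    (hB : ∀ w ∈ closedBall a ρ, sphDeriv h g w ≤ B)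
    (hρ : 2 * B * ρ * √(1 + ‖h a + conj (g a)‖ ^ 2) ≤ 1) {w : ℂ} (hw : w ∈ closedBall a ρ) :
    1 + ‖h w + conj (g w)‖ ^ 2 ≤ 4 * (1 + ‖h a + conj (g a)‖ ^ 2) := by
  have ha : a ∈ closedBall a ρ := mem_closedBall_self (dist_nonneg.trans hw)
  choose! D hD hDn using fun w hw => exists_hasFDerivAt_add_conj (hh w hw) (hg w hw)
  have hlip := abs_inv_sqrt_one_add_norm_sq_sub_le (convex_closedBall a ρ) hD
    (fun w hw => (div_le_div_of_nonneg_right (hDn w hw) (by positivity)).trans (hB w hw)) ha hw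
  set sa := √(1 + ‖h a + conj (g a)‖ ^ 2)
  set sw := √(1 + ‖h w + conj (g w)‖ ^ 2)
  have hsa : 0 < sa := Real.sqrt_pos.2 (by positivity)
  have hB0 : 0 ≤ B := sphDeriv_nonneg.trans (hB a ha)
  have hBρ : B * ‖w - a‖ ≤ 1 / (2 * sa) := by
    rw [le_div_iff₀ (by positivity)]
    have hBw : B * ‖w - a‖ ≤ B * ρ := mul_le_mul_of_nonneg_left (mem_closedBall_iff_norm.1 hw) hB0
    nlinarith
  have hswa : sw ≤ 2 * sa := by
    have hhalf : sa⁻¹ = 2 * (1 / (2 * sa)) := by field_simp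
    refine le_of_one_div_le_one_div (by positivity) ?_
    rw [one_div sw]
    linarith [(abs_le.1 hlip).1]
  calc 1 + ‖h w + conj (g w)‖ ^ 2 = sw ^ 2 := (Real.sq_sqrt (by positivity)).symm
    _ ≤ (2 * sa) ^ 2 := by gcongr
    _ = 4 * (1 + ‖h a + conj (g a)‖ ^ 2) := by rw [mul_pow, Real.sq_sqrt (by positivity)]; ring

lemma norm_iteratedDeriv_succ_add_le_of_sphDeriv_le (k : ℕ) (hU : IsOpen U)
    (hh : DifferentiableOn ℂ h U) (hg : DifferentiableOn ℂ g U) (hρ0 : 0 < ρ)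
    (hsub : closedBall a ρ ⊆ U) (hB : ∀ w ∈ closedBall a ρ, sphDeriv h g w ≤ B)
    (hρ : 2 * B * ρ * √(1 + ‖h a + conj (g a)‖ ^ 2) ≤ 1) :
    ‖iteratedDeriv (k + 1) h a‖ + ‖iteratedDeriv (k + 1) g a‖ ≤
      2 * (k.factorial * (4 * B * (1 + ‖h a + conj (g a)‖ ^ 2)) / ρ ^ k) := by
  have hdiff {F : ℂ → ℂ} (hF : DifferentiableOn ℂ F U) :
      ∀ w ∈ closedBall a ρ, DifferentiableAt ℂ F w :=
    fun w hw => hF.differentiableAt (hU.mem_nhds (hsub hw))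
  have hderiv : ∀ w ∈ closedBall a ρ,
      ‖deriv h w‖ + ‖deriv g w‖ ≤ 4 * B * (1 + ‖h a + conj (g a)‖ ^ 2) := by
    intro w hw
    calc ‖deriv h w‖ + ‖deriv g w‖ = sphDeriv h g w * (1 + ‖h w + conj (g w)‖ ^ 2) := by
          unfold sphDeriv; field_simp
      _ ≤ B * (4 * (1 + ‖h a + conj (g a)‖ ^ 2)) := by
          refine mul_le_mul (hB w hw) ?_ (by positivity) (sphDeriv_nonneg.trans (hB w hw))
          exact one_add_norm_sq_le_of_sphDeriv_le (hdiff hh) (hdiff hg) hB hρ hw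
      _ = 4 * B * (1 + ‖h a + conj (g a)‖ ^ 2) := by ring
  have hcauchy {F : ℂ → ℂ} (hF : DifferentiableOn ℂ F U)
      (hF' : ∀ w ∈ closedBall a ρ, ‖deriv F w‖ ≤ 4 * B * (1 + ‖h a + conj (g a)‖ ^ 2)) :
      ‖iteratedDeriv (k + 1) F a‖ ≤
        k.factorial * (4 * B * (1 + ‖h a + conj (g a)‖ ^ 2)) / ρ ^ k := by
    rw [iteratedDeriv_succ']
    refine Complex.norm_iteratedDeriv_le_of_forall_mem_sphere_norm_le k hρ0 ?_
      fun w hw => hF' w (sphere_subset_closedBall hw)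
    refine DifferentiableOn.diffContOnCl ?_
    rw [closure_ball a hρ0.ne']
    exact ((hF.analyticOnNhd hU).deriv.differentiableOn).mono hsub
  have hcauchy_h := hcauchy hh fun w hw =>
    (le_add_of_nonneg_right (norm_nonneg _)).trans (hderiv w hw)
  have hcauchy_g := hcauchy hg fun w hw =>
    (le_add_of_nonneg_left (norm_nonneg _)).trans (hderiv w hw)
  linarith

theorem sphDerivK_succ_le (k : ℕ) (hU : IsOpen U) (hh : DifferentiableOn ℂ h U)
    (hg : DifferentiableOn ℂ g U) (hB0 : 0 < B)
    (hsub : closedBall a (2 * B * √(1 + ‖h a + conj (g a)‖ ^ 2))⁻¹ ⊆ U)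
    (hB : ∀ w ∈ closedBall a (2 * B * √(1 + ‖h a + conj (g a)‖ ^ 2))⁻¹, sphDeriv h g w ≤ B) :
    sphDerivK (k + 1) h g a ≤ 2 ^ (2 * k + 5) * k.factorial * B ^ (k + 1) := by
  set x := ‖h a + conj (g a)‖
  set s := √(1 + x ^ 2)
  have hs : 0 < s := Real.sqrt_pos.2 (by positivity)
  have hρ : 2 * B * (2 * B * s)⁻¹ * s = 1 := by field_simp
  have hnum := norm_iteratedDeriv_succ_add_le_of_sphDeriv_le k hU hh hg (by positivity) hsub hB
    hρ.le
  have hs2 : 1 + x ^ 2 = s ^ 2 := (Real.sq_sqrt (by positivity)).symm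
  have hpow := pow_sqrt_one_add_sq_le (norm_nonneg (h a + conj (g a))) (k + 2)
  unfold sphDerivK
  rw [div_le_iff₀ (by positivity)]
  calc ‖iteratedDeriv (k + 1) h a‖ + ‖iteratedDeriv (k + 1) g a‖
      ≤ 2 ^ (k + 3) * k.factorial * B ^ (k + 1) * s ^ (k + 2) := by
        refine hnum.trans_eq ?_
        rw [hs2, inv_pow, div_inv_eq_mul]
        ring
    _ ≤ 2 ^ (k + 3) * k.factorial * B ^ (k + 1) * (2 ^ (k + 2) * (1 + x ^ (k + 2))) := by gcongr
    _ = 2 ^ (2 * k + 5) * k.factorial * B ^ (k + 1) * (1 + x ^ (k + 1 + 1)) := by ring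

lemma exists_sphDerivK_le_of_isCompact {K : Set ℂ} (k : ℕ) (hU : IsOpen U)
    (hh : DifferentiableOn ℂ h U) (hg : DifferentiableOn ℂ g U) (hK : IsCompact K)
    (hKU : K ⊆ U) : ∃ M, ∀ z ∈ K, sphDerivK k h g z ≤ M := by
  have hcont {F : ℂ → ℂ} (hF : DifferentiableOn ℂ F U) : ContinuousOn (iteratedDeriv k F) K := by
    rw [iteratedDeriv_eq_iterate]
    exact ((hF.analyticOnNhd hU).iterated_deriv k).continuousOn.mono hKU
  obtain ⟨M, hM⟩ := hK.exists_bound_of_continuousOn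
    ((hcont hh).norm.add (hcont hg).norm)
  refine ⟨M, fun z hz => ?_⟩
  have hnum : 0 ≤ ‖iteratedDeriv k h z‖ + ‖iteratedDeriv k g z‖ := by positivity
  calc sphDerivK k h g z ≤ ‖iteratedDeriv k h z‖ + ‖iteratedDeriv k g z‖ :=
        div_le_self hnum (le_add_of_nonneg_right (by positivity))
    _ ≤ M := by simpa only [Pi.add_apply, Real.norm_of_nonneg hnum] using hM z hz

lemma exists_sphDerivK_div_pow_le_on_closedBall {φ : ℝ → ℝ} (hφ : ∀ r ∈ Ico (0 : ℝ) 1, 0 < φ r)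
    (hconv : ConvexOn ℝ (Ico (0 : ℝ) 1) fun r => (φ r)⁻¹) (k : ℕ)
    (hh : DifferentiableOn ℂ h (ball 0 1)) (hg : DifferentiableOn ℂ g (ball 0 1)) {r : ℝ}
    (hr : r ∈ Ico (0 : ℝ) 1) :
    ∃ M, ∀ a ∈ closedBall (0 : ℂ) r, sphDerivK k h g a / φ ‖a‖ ^ k ≤ M := by
  obtain ⟨M, hM⟩ := exists_sphDerivK_le_of_isCompact k isOpen_ball hh hg
    (isCompact_closedBall 0 r) (closedBall_subset_ball hr.2)
  have hm : 0 < min (φ 0) (φ r) := lt_min (hφ 0 ⟨le_rfl, one_pos⟩) (hφ r hr)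
  refine ⟨M / min (φ 0) (φ r) ^ k, fun a ha => ?_⟩
  have hφa : min (φ 0) (φ r) ≤ φ ‖a‖ := by
    refine min_le_of_convexOn_inv hconv hφ ⟨le_rfl, one_pos⟩ hr ?_
    rw [segment_eq_Icc hr.1]
    exact ⟨norm_nonneg a, mem_closedBall_zero_iff.1 ha⟩
  exact div_le_div₀ (sphDerivK_nonneg.trans (hM a ha)) (hM a ha) (by positivity) (by gcongr)

lemma sphDerivK_succ_le_mul_pow {φ : ℝ → ℝ} {C : ℝ} (k : ℕ) (hC : 1 ≤ C)
    (hh : DifferentiableOn ℂ h (ball 0 1)) (hg : DifferentiableOn ℂ g (ball 0 1))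
    (hsph : ∀ z ∈ ball 0 1, sphDeriv h g z ≤ C * φ ‖z‖) (hφa : 0 < φ ‖a‖)
    (hsub : ball a (φ ‖a‖)⁻¹ ⊆ ball 0 1) (hφle : ∀ w ∈ ball a (φ ‖a‖)⁻¹, φ ‖w‖ ≤ 2 * φ ‖a‖) :
    sphDerivK (k + 1) h g a ≤
      2 ^ (2 * k + 5) * k.factorial * (2 * C) ^ (k + 1) * φ ‖a‖ ^ (k + 1) := by
  set A := φ ‖a‖
  set s := √(1 + ‖h a + conj (g a)‖ ^ 2)
  have hs : 1 ≤ s := Real.one_le_sqrt.2 (by linarith [sq_nonneg ‖h a + conj (g a)‖])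
  have hball : closedBall a (2 * (2 * C * A) * s)⁻¹ ⊆ ball a A⁻¹ := by
    have hCs : 1 ≤ C * s := one_le_mul_of_one_le_of_one_le hC hs
    refine closedBall_subset_ball (inv_strictAnti₀ hφa ?_)
    nlinarith
  have hB : ∀ w ∈ closedBall a (2 * (2 * C * A) * s)⁻¹, sphDeriv h g w ≤ 2 * C * A := by
    intro w hw
    calc sphDeriv h g w ≤ C * φ ‖w‖ := hsph w (hsub (hball hw))
      _ ≤ C * (2 * A) := mul_le_mul_of_nonneg_left (hφle w (hball hw)) (by linarith)
      _ = 2 * C * A := by ring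
  calc sphDerivK (k + 1) h g a ≤ 2 ^ (2 * k + 5) * k.factorial * (2 * C * A) ^ (k + 1) :=
        sphDerivK_succ_le k isOpen_ball hh hg (by positivity) (hball.trans hsub) hB
    _ = 2 ^ (2 * k + 5) * k.factorial * (2 * C) ^ (k + 1) * A ^ (k + 1) := by ring

end HarmonicMapping

theorem stmt4_general (φ : ℝ → ℝ) (hφ : SmoothlyIncreasing φ)
    (hconv : ConvexOn ℝ (Set.Ico (0 : ℝ) 1) fun r => (φ r)⁻¹)
    (k : ℕ) (hk : 1 ≤ k)
    (h g : ℂ → ℂ)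
    (hh : DifferentiableOn ℂ h (ball (0 : ℂ) 1))
    (hg : DifferentiableOn ℂ g (ball (0 : ℂ) 1))
    (hnormal : ∃ C : ℝ, ∀ z ∈ ball (0 : ℂ) 1, sphDeriv h g z / φ ‖z‖ ≤ C) :
    ∃ C : ℝ, ∀ z ∈ ball (0 : ℂ) 1, sphDerivK k h g z / φ ‖z‖ ^ k ≤ C := by
  obtain ⟨k, rfl⟩ := Nat.exists_eq_add_of_le' hk
  obtain ⟨C, hC⟩ := hnormal
  have hφpos {z : ℂ} (hz : z ∈ ball (0 : ℂ) 1) : 0 < φ ‖z‖ :=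
    hφ.1 _ ⟨norm_nonneg z, mem_ball_zero_iff.1 hz⟩
  have hsph : ∀ z ∈ ball (0 : ℂ) 1, sphDeriv h g z ≤ max C 1 * φ ‖z‖ := fun z hz =>
    (div_le_iff₀ (hφpos hz)).1 ((hC z hz).trans (le_max_left C 1))
  obtain ⟨r, hr, hnear⟩ := exists_forall_of_eventually_comap_norm
    (hφ.eventually_ball_subset.and hφ.eventually_le_two_mul)
  obtain ⟨M, hM⟩ := exists_sphDerivK_div_pow_le_on_closedBall hφ.1 hconv (k + 1) hh hg hr
  refine ⟨max M (2 ^ (2 * k + 5) * k.factorial * (2 * max C 1) ^ (k + 1)), fun a ha => ?_⟩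
  rcases le_or_gt ‖a‖ r with har | har
  · exact le_max_of_le_left (hM a (mem_closedBall_zero_iff.2 har))
  · obtain ⟨hsub, hφle⟩ := hnear a har (mem_ball_zero_iff.1 ha)
    refine le_max_of_le_right ((div_le_iff₀ (pow_pos (hφpos ha) _)).2 ?_)
    exact sphDerivK_succ_le_mul_pow k (le_max_right C 1) hh hg hsph (hφpos ha) hsub hφle

/-- If `φ` is smoothly increasing with `1/φ` convex and the harmonic mapping
`f = h + conj g` is `φ`-normal on `𝔻`, then `f^{#(k)}(z)/φ(|z|)^k` is bounded on `𝔻`. -/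
theorem stmt4 (φ : ℝ → ℝ) (hφ : SmoothlyIncreasing φ)
    (hconv : ConvexOn ℝ (Set.Ico (0 : ℝ) 1) fun r => (φ r)⁻¹)
    (k : ℕ) (hk : 1 ≤ k)
    (h g f : ℂ → ℂ)
    (hh : DifferentiableOn ℂ h (ball (0 : ℂ) 1))
    (hg : DifferentiableOn ℂ g (ball (0 : ℂ) 1))
    (hf : ∀ z, f z = h z + conj (g z))
    (hnormal : ∃ C : ℝ, ∀ z ∈ ball (0 : ℂ) 1, sphDeriv h g z / φ ‖z‖ ≤ C) :
    ∃ C : ℝ, ∀ z ∈ ball (0 : ℂ) 1, sphDerivK k h g z / φ ‖z‖ ^ k ≤ C :=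
  stmt4_general φ hφ hconv k hk h g hh hg hnormal
end

section
/- Let {f_n} be a sequence of sense-preserving harmonic mappings on the open unit disk 𝔻 such that f_n converges locally uniformly on 𝔻 to a sense-preserving harmonic mapping f. Then a point z₀ ∈ 𝔻 is a zero of f if and only if z₀ is a cluster point of the zeros of the mappings f_n, n ≥ 1 (i.e., there exist indices n_k → ∞ and points w_k → z₀ with f_{n_k}(w_k) = 0). -/
/-!
Write `f = h + conj g`. Since `‖g'(z₀)‖ < ‖h'(z₀)‖`, the real differential
`w ↦ h'(z₀) w + conj (g'(z₀) w)` of `f` at `z₀` is invertible. A Cauchy estimate for maps of the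
form `φ + conj ψ` (the conjugate part contributes nothing to `∮ u(z) / (z - c)² dz`) turns uniform
convergence `fₙ → f` into uniform convergence of the derivatives of `hₙ - h` and `gₙ - g`, so
`fₙ - f` has a small Lipschitz constant near `z₀`. Then `fₙ` approximates the invertible
differential of `f` uniformly on a fixed disk around `z₀`, and the quantitative surjectivity behind
the inverse function theorem puts `0` into `fₙ` of every small disk around `z₀` once `n` is large.
The converse holds because locally uniform limits commute with limits of points.
-/

open Complex Metric Set Filter ComplexConjugate

open scoped NNReal Topology Real

theorem HasStrictFDerivAt.eventually_exists_zero {𝕜 E F ι : Type*} [NontriviallyNormedField 𝕜]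
    [NormedAddCommGroup E] [NormedSpace 𝕜 E] [CompleteSpace E]
    [NormedAddCommGroup F] [NormedSpace 𝕜 F] [CompleteSpace F] {l : Filter ι} {f : E → F}
    {fn : ι → E → F} {L : E →L[𝕜] F} {a : E} {U : Set E}
    (hf : HasStrictFDerivAt f L a) (hL : L.range = ⊤) (hU : U ∈ 𝓝 a)
    (hlip : ∀ c : ℝ≥0, 0 < c → ∀ᶠ i in l, LipschitzOnWith c (fn i - f) U)
    (hlim : Tendsto (fun i => fn i a) l (𝓝 0)) :
    ∀ V ∈ 𝓝 a, ∀ᶠ i in l, ∃ x ∈ V, fn i x = 0 := by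
  intro V hV
  set Linv := L.nonlinearRightInverseOfSurjective hL
  set c : ℝ≥0 := Linv.nnnorm⁻¹ / 4 with hc
  have hc0 : 0 < c := by
    simpa [hc] using L.nonlinearRightInverseOfSurjective_nnnorm_pos hL
  obtain ⟨s, hs, hfs⟩ := hf.approximates_deriv_on_nhds (Or.inr hc0)
  obtain ⟨δ, hδ, hδsub⟩ := Metric.mem_nhds_iff.mp (inter_mem (inter_mem hs hU) hV)
  have hδ' : 0 < δ / 2 := half_pos hδ
  have hball : closedBall a (δ / 2) ⊆ (s ∩ U) ∩ V :=
    (closedBall_subset_ball (half_lt_self hδ)).trans hδsub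
  have hradius : 0 < (2 * c : ℝ) * (δ / 2) := by positivity
  filter_upwards [hlip c hc0, hlim.eventually (closedBall_mem_nhds 0 hradius)] with i hi hia
  -- with `N = Linv.nnnorm`, `fn i` approximates `L` with constant `2 c = N⁻¹ / 2`, so the image
  -- `fn i '' closedBall a (δ / 2)` contains `closedBall (fn i a) ((N⁻¹ - 2 c) (δ / 2))`
  have happrox : ApproximatesLinearOn (fn i) L (closedBall a (δ / 2)) (c + c) := by
    have := (hi.mono fun x hx => (hball hx).1.2).add
      (hfs.lipschitzOnWith.mono fun x hx => (hball hx).1.1)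
    simp only [Pi.sub_apply, sub_add_sub_cancel] at this
    exact this.approximatesLinearOn
  obtain ⟨x, hx, hx0⟩ := happrox.surjOn_closedBall_of_nonlinearRightInverse Linv hδ'.le le_rfl
    (show (0 : F) ∈ _ by
      rw [mem_closedBall, dist_comm]
      refine (mem_closedBall.mp hia).trans (mul_le_mul_of_nonneg_right ?_ hδ'.le)
      rw [hc]
      push_cast
      linarith)
  exact ⟨x, (hball hx).2, hx0⟩

theorem exists_strictMono_tendsto_of_forall_nhds {X : Type*} [TopologicalSpace X]
    [FirstCountableTopology X] {P : ℕ → X → Prop} {a : X}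
    (h : ∀ V ∈ 𝓝 a, ∀ᶠ n in atTop, ∃ x ∈ V, P n x) :
    ∃ (φ : ℕ → ℕ) (x : ℕ → X), StrictMono φ ∧ Tendsto x atTop (𝓝 a) ∧ ∀ k, P (φ k) (x k) := by
  obtain ⟨V, hV⟩ := (𝓝 a).exists_antitone_basis
  obtain ⟨φ, hφ, hx⟩ := extraction_forall_of_eventually fun k => h (V k) (hV.mem k)
  choose x hxV hP using hx
  exact ⟨φ, x, hφ, hV.tendsto hxV, hP⟩

theorem TendstoLocallyUniformlyOn.apply_eq_of_forall_apply_eq {α β : Type*} [TopologicalSpace α]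
    [UniformSpace β] [T2Space β] {F : ℕ → α → β} {f : α → β} {s : Set α} {a : α} {b : β}
    (hF : TendstoLocallyUniformlyOn F f atTop s) (hf : ContinuousWithinAt f s a) (ha : a ∈ s)
    {φ : ℕ → ℕ} (hφ : Tendsto φ atTop atTop) {x : ℕ → α} (hxs : ∀ k, x k ∈ s)
    (hxa : Tendsto x atTop (𝓝 a)) (hb : ∀ k, F (φ k) (x k) = b) : f a = b := by
  have hsubseq : TendstoLocallyUniformlyOn (fun k => F (φ k)) f atTop s := fun u hu y hy =>
    (hF u hu y hy).imp fun _ ⟨ht, hev⟩ => ⟨ht, hφ.eventually hev⟩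
  have := hsubseq.tendsto_comp hf ha (tendsto_nhdsWithin_iff.mpr ⟨hxa, .of_forall hxs⟩)
  simp only [hb] at this
  exact tendsto_nhds_unique this tendsto_const_nhds

noncomputable def addConjCLM (a b : ℂ) : ℂ →L[ℝ] ℂ :=
  (ContinuousLinearMap.mul ℂ ℂ a).restrictScalars ℝ +
    conjCLE.toContinuousLinearMap.comp ((ContinuousLinearMap.mul ℂ ℂ b).restrictScalars ℝ)

@[simp]
theorem addConjCLM_apply (a b w : ℂ) : addConjCLM a b w = a * w + conj (b * w) := rfl

theorem norm_addConjCLM_le (a b : ℂ) : ‖addConjCLM a b‖ ≤ ‖a‖ + ‖b‖ :=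
  ContinuousLinearMap.opNorm_le_bound _ (by positivity) fun w => by
    simpa [add_mul] using norm_add_le (a * w) (conj (b * w))

theorem range_addConjCLM {a b : ℂ} (hab : ‖b‖ < ‖a‖) : (addConjCLM a b).range = ⊤ := by
  have hinj : Function.Injective (addConjCLM a b) := by
    refine (injective_iff_map_eq_zero _).mpr fun w hw => ?_
    have : ‖a * w‖ = ‖b * w‖ := by
      rw [addConjCLM_apply, add_eq_zero_iff_eq_neg] at hw
      simp [hw]
    simp only [norm_mul] at this
    by_contra hw0
    exact hab.ne' (mul_right_cancel₀ (norm_ne_zero_iff.mpr hw0) this)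
  exact LinearMap.range_eq_top.mpr (LinearMap.injective_iff_surjective.mp hinj)

theorem HasStrictDerivAt.add_conj {p q : ℂ → ℂ} {a b x : ℂ} (hp : HasStrictDerivAt p a x)
    (hq : HasStrictDerivAt q b x) :
    HasStrictFDerivAt (fun z => p z + conj (q z)) (addConjCLM a b) x := by
  refine (hp.hasStrictFDerivAt.restrictScalars ℝ).add
    (conjCLE.toContinuousLinearMap.hasStrictFDerivAt.comp x
      (hq.hasStrictFDerivAt.restrictScalars ℝ)) |>.congr_fderiv ?_
  ext w; simp [mul_comm]

theorem hasStrictFDerivAt_add_conj_of_differentiableOn {p q : ℂ → ℂ} {U : Set ℂ} {x : ℂ}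
    (hp : DifferentiableOn ℂ p U) (hq : DifferentiableOn ℂ q U) (hU : IsOpen U) (hx : x ∈ U) :
    HasStrictFDerivAt (fun z => p z + conj (q z)) (addConjCLM (deriv p x) (deriv q x)) x :=
  ((hp.analyticAt (hU.mem_nhds hx)).hasStrictDerivAt).add_conj
    (hq.analyticAt (hU.mem_nhds hx)).hasStrictDerivAt

theorem Convex.lipschitzOnWith_add_conj {p q : ℂ → ℂ} {U s : Set ℂ} {C : ℝ≥0}
    (hp : DifferentiableOn ℂ p U) (hq : DifferentiableOn ℂ q U) (hU : IsOpen U) (hs : Convex ℝ s)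
    (hsU : s ⊆ U) (hC : ∀ x ∈ s, ‖deriv p x‖ + ‖deriv q x‖ ≤ C) :
    LipschitzOnWith C (fun z => p z + conj (q z)) s :=
  hs.lipschitzOnWith_of_nnnorm_hasFDerivWithin_le
    (fun x hx => (hasStrictFDerivAt_add_conj_of_differentiableOn hp hq hU
      (hsU hx)).hasFDerivAt.hasFDerivWithinAt)
    fun x hx => by
      rw [← NNReal.coe_le_coe, coe_nnnorm]
      exact (norm_addConjCLM_le _ _).trans (hC x hx)

theorem circleIntegral_one_div_sub_center_sq_smul_conj_eq_zero {ψ : ℂ → ℂ} {c : ℂ} {R : ℝ}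
    (hR : 0 < R) (hψ : DifferentiableOn ℂ ψ (closedBall c R)) :
    (∮ z in C(c, R), (1 / (z - c) ^ 2) • conj (ψ z)) = 0 := by
  -- on the circle `1 / (z - c) = conj (z - c) / R ^ 2`: the integrand is conjugate to that of `∮ ψ`
  have hpt : ∀ θ : ℝ, deriv (circleMap c R) θ • (1 / (circleMap c R θ - c) ^ 2) •
      conj (ψ (circleMap c R θ)) =
      conj ((-(R : ℂ) ^ 2)⁻¹ • (deriv (circleMap c R) θ • ψ (circleMap c R θ))) := by
    intro θ
    have hsq : circleMap 0 R θ * conj (circleMap 0 R θ) = (R : ℂ) ^ 2 := by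
      rw [mul_conj, normSq_eq_norm_sq, norm_circleMap_zero, sq_abs, ofReal_pow]
    have hne : circleMap 0 R θ ≠ 0 := circleMap_ne_center hR.ne'
    simp only [deriv_circleMap, circleMap_sub_center, smul_eq_mul, map_mul, map_inv₀, map_neg,
      map_pow, conj_ofReal, conj_I]
    have hR0 : (R : ℂ) ≠ 0 := ofReal_ne_zero.mpr hR.ne'
    field_simp
    linear_combination -conj (ψ (circleMap c R θ)) * hsq
  have hzero : (∮ z in C(c, R), ψ z) = 0 :=
    (hψ.diffContOnCl_ball subset_rfl).circleIntegral_eq_zero hR.le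
  rw [circleIntegral] at hzero ⊢
  simp only [hpt, intervalIntegral.intervalIntegral_conj, intervalIntegral.integral_smul, hzero,
    smul_zero, map_zero]

theorem norm_deriv_le_of_forall_mem_sphere_norm_add_conj_le {φ ψ : ℂ → ℂ} {c : ℂ} {R C : ℝ}
    (hR : 0 < R) (hφ : DifferentiableOn ℂ φ (closedBall c R))
    (hψ : DifferentiableOn ℂ ψ (closedBall c R))
    (hC : ∀ z ∈ sphere c R, ‖φ z + conj (ψ z)‖ ≤ C) : ‖deriv φ c‖ ≤ C / R := by
  have hint : ∀ u : ℂ → ℂ, ContinuousOn u (closedBall c R) →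
      CircleIntegrable (fun z => (1 / (z - c) ^ 2) • u z) c R := fun u hu =>
    ContinuousOn.circleIntegrable hR.le <|
      (continuousOn_const.div (by fun_prop) fun z hz =>
        pow_ne_zero _ (sub_ne_zero.mpr (ne_of_mem_sphere hz hR.ne'))).smul
      (hu.mono sphere_subset_closedBall)
  have hderiv : deriv φ c =
      (2 * π * I)⁻¹ • ∮ z in C(c, R), (1 / (z - c) ^ 2) • (φ z + conj (ψ z)) := by
    simp only [smul_add]
    rw [circleIntegral.integral_add (hint _ hφ.continuousOn)
        (hint (fun z => conj (ψ z)) (continuous_conj.comp_continuousOn hψ.continuousOn)),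
      circleIntegral_one_div_sub_center_sq_smul_conj_eq_zero hR hψ, add_zero,
      hφ.deriv_eq_smul_circleIntegral hR, inv_smul_smul₀ two_pi_I_ne_zero]
  have hbound : ∀ z ∈ sphere c R, ‖(1 / (z - c) ^ 2) • (φ z + conj (ψ z))‖ ≤ C / R ^ 2 := by
    intro z hz
    rw [norm_smul, norm_div, norm_one, norm_pow, ← dist_eq_norm, mem_sphere.mp hz,
      one_div_mul_eq_div]
    gcongr
    exact hC z hz
  calc ‖deriv φ c‖ ≤ R * (C / R ^ 2) := hderiv ▸
        circleIntegral.norm_two_pi_i_inv_smul_integral_le_of_norm_le_const hR.le hbound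
    _ = C / R := by field_simp

theorem norm_deriv_add_norm_deriv_le_of_forall_mem_sphere_norm_add_conj_le {φ ψ : ℂ → ℂ} {c : ℂ}
    {R C : ℝ} (hR : 0 < R) (hφ : DifferentiableOn ℂ φ (closedBall c R))
    (hψ : DifferentiableOn ℂ ψ (closedBall c R))
    (hC : ∀ z ∈ sphere c R, ‖φ z + conj (ψ z)‖ ≤ C) :
    ‖deriv φ c‖ + ‖deriv ψ c‖ ≤ 2 * C / R := by
  have hC' : ∀ z ∈ sphere c R, ‖ψ z + conj (φ z)‖ ≤ C := fun z hz => by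
    rw [← norm_conj, map_add, conj_conj, add_comm]
    exact hC z hz
  rw [two_mul, add_div]
  exact add_le_add (norm_deriv_le_of_forall_mem_sphere_norm_add_conj_le hR hφ hψ hC)
    (norm_deriv_le_of_forall_mem_sphere_norm_add_conj_le hR hψ hφ hC')

theorem lipschitzOnWith_add_conj_of_forall_norm_le {p q : ℂ → ℂ} {z₀ : ℂ} {ρ C : ℝ} (hρ : 0 < ρ)
    (hp : DifferentiableOn ℂ p (closedBall z₀ (2 * ρ)))
    (hq : DifferentiableOn ℂ q (closedBall z₀ (2 * ρ)))
    (hC : ∀ z ∈ closedBall z₀ (2 * ρ), ‖p z + conj (q z)‖ ≤ C) :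
    LipschitzOnWith (2 * C / ρ).toNNReal (fun z => p z + conj (q z)) (ball z₀ ρ) := by
  have hball : ball z₀ ρ ⊆ ball z₀ (2 * ρ) := ball_subset_ball (by linarith)
  refine (convex_ball z₀ ρ).lipschitzOnWith_add_conj (hp.mono ball_subset_closedBall)
    (hq.mono ball_subset_closedBall) isOpen_ball hball fun x hx => ?_
  have hsub : closedBall x ρ ⊆ closedBall z₀ (2 * ρ) :=
    closedBall_subset_closedBall' (by linarith [mem_ball.mp hx])
  exact (norm_deriv_add_norm_deriv_le_of_forall_mem_sphere_norm_add_conj_le hρ (hp.mono hsub)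
    (hq.mono hsub) fun z hz => hC z (hsub (sphere_subset_closedBall hz))).trans
    (Real.le_coe_toNNReal _)

theorem TendstoUniformlyOn.eventually_lipschitzOnWith_add_conj_sub {ι : Type*} {l : Filter ι}
    {p q : ι → ℂ → ℂ} {p₀ q₀ : ℂ → ℂ} {z₀ : ℂ} {ρ : ℝ} (hρ : 0 < ρ)
    (hp : ∀ i, DifferentiableOn ℂ (p i) (closedBall z₀ (2 * ρ)))
    (hq : ∀ i, DifferentiableOn ℂ (q i) (closedBall z₀ (2 * ρ)))
    (hp₀ : DifferentiableOn ℂ p₀ (closedBall z₀ (2 * ρ)))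
    (hq₀ : DifferentiableOn ℂ q₀ (closedBall z₀ (2 * ρ)))
    (hconv : TendstoUniformlyOn (fun i z => p i z + conj (q i z)) (fun z => p₀ z + conj (q₀ z)) l
      (closedBall z₀ (2 * ρ)))
    {c : ℝ≥0} (hc : 0 < c) :
    ∀ᶠ i in l, LipschitzOnWith c
      ((fun z => p i z + conj (q i z)) - fun z => p₀ z + conj (q₀ z)) (ball z₀ ρ) := by
  have hε : (0 : ℝ) < c * ρ / 2 := by positivity
  filter_upwards [Metric.tendstoUniformlyOn_iff.mp hconv _ hε] with i hi
  have hsub : ((fun z => p i z + conj (q i z)) - fun z => p₀ z + conj (q₀ z)) =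
      fun z => (p i - p₀) z + conj ((q i - q₀) z) := by
    ext z
    simp only [Pi.sub_apply, map_sub]
    ring
  have hlip := lipschitzOnWith_add_conj_of_forall_norm_le hρ ((hp i).sub hp₀) ((hq i).sub hq₀)
    (C := c * ρ / 2) fun z hz => by
      rw [← congrFun hsub z, Pi.sub_apply, ← dist_eq_norm, dist_comm]
      exact (hi z hz).le
  rwa [← hsub, show 2 * (c * ρ / 2) / ρ = c by field_simp, Real.toNNReal_coe] at hlip

theorem stmt12_general (hn gn : ℕ → ℂ → ℂ) (h g : ℂ → ℂ)
    (hhn : ∀ n, DifferentiableOn ℂ (hn n) (ball (0 : ℂ) 1))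
    (hgn : ∀ n, DifferentiableOn ℂ (gn n) (ball (0 : ℂ) 1))
    (hh : DifferentiableOn ℂ h (ball (0 : ℂ) 1))
    (hg : DifferentiableOn ℂ g (ball (0 : ℂ) 1))
    (hsp : ∀ z ∈ ball (0 : ℂ) 1, deriv h z ≠ 0 ∧ ‖deriv g z‖ < ‖deriv h z‖)
    (hconv : TendstoLocallyUniformlyOn (fun n z => hn n z + conj (gn n z))
      (fun z => h z + conj (g z)) atTop (ball (0 : ℂ) 1))
    (z₀ : ℂ) (hz₀ : z₀ ∈ ball (0 : ℂ) 1) :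
    h z₀ + conj (g z₀) = 0 ↔
      ∃ (nk : ℕ → ℕ) (w : ℕ → ℂ), StrictMono nk ∧ (∀ k, w k ∈ ball (0 : ℂ) 1) ∧
        Tendsto w atTop (nhds z₀) ∧ ∀ k, hn (nk k) (w k) + conj (gn (nk k) (w k)) = 0 := by
  constructor
  · intro hz
    obtain ⟨ρ, hρ, hsub⟩ : ∃ ρ > 0, closedBall z₀ (2 * ρ) ⊆ ball (0 : ℂ) 1 := by
      obtain ⟨r, hr, hrsub⟩ := Metric.isOpen_iff.mp isOpen_ball z₀ hz₀
      exact ⟨r / 4, by positivity, (closedBall_subset_ball (by linarith)).trans hrsub⟩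
    have hunif := (tendstoLocallyUniformlyOn_iff_forall_isCompact isOpen_ball).mp hconv _ hsub
      (isCompact_closedBall _ _)
    have hzeros := (hasStrictFDerivAt_add_conj_of_differentiableOn hh hg isOpen_ball hz₀
      ).eventually_exists_zero (range_addConjCLM (hsp z₀ hz₀).2) (ball_mem_nhds z₀ hρ)
      (fun c hc => hunif.eventually_lipschitzOnWith_add_conj_sub hρ (fun n => (hhn n).mono hsub)
        (fun n => (hgn n).mono hsub) (hh.mono hsub) (hg.mono hsub) hc)
      (hz ▸ hconv.tendsto_at hz₀)
    obtain ⟨nk, w, hmono, hlim, hw⟩ := exists_strictMono_tendsto_of_forall_nhds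
      (P := fun n x => x ∈ ball (0 : ℂ) 1 ∧ hn n x + conj (gn n x) = 0) fun V hV =>
      (hzeros _ (inter_mem hV (isOpen_ball.mem_nhds hz₀))).mono
        fun n ⟨x, ⟨hxV, hx⟩, hx0⟩ => ⟨x, hxV, hx, hx0⟩
    exact ⟨nk, w, hmono, fun k => (hw k).1, hlim, fun k => (hw k).2⟩
  · rintro ⟨nk, w, hmono, hw, hlim, hzero⟩
    have hf : ContinuousOn (fun z => h z + conj (g z)) (ball 0 1) :=
      hh.continuousOn.add (continuous_conj.comp_continuousOn hg.continuousOn)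
    exact hconv.apply_eq_of_forall_apply_eq (hf z₀ hz₀) hz₀ hmono.tendsto_atTop hw hlim hzero

/-- Hurwitz-type theorem for harmonic mappings: if sense-preserving harmonic mappings
`fₙ = hₙ + conj gₙ` converge locally uniformly on `𝔻` to a sense-preserving harmonic
mapping `f = h + conj g`, then `z₀ ∈ 𝔻` is a zero of `f` iff `z₀` is a cluster point
of zeros of the `fₙ`. -/
theorem stmt12 (hn gn : ℕ → ℂ → ℂ) (h g : ℂ → ℂ)
    (hhn : ∀ n, DifferentiableOn ℂ (hn n) (ball (0 : ℂ) 1))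
    (hgn : ∀ n, DifferentiableOn ℂ (gn n) (ball (0 : ℂ) 1))
    (hspn : ∀ n, ∀ z ∈ ball (0 : ℂ) 1, deriv (hn n) z ≠ 0 ∧ ‖deriv (gn n) z‖ < ‖deriv (hn n) z‖)
    (hh : DifferentiableOn ℂ h (ball (0 : ℂ) 1))
    (hg : DifferentiableOn ℂ g (ball (0 : ℂ) 1))
    (hsp : ∀ z ∈ ball (0 : ℂ) 1, deriv h z ≠ 0 ∧ ‖deriv g z‖ < ‖deriv h z‖)
    (hconv : TendstoLocallyUniformlyOn (fun n z => hn n z + conj (gn n z))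
      (fun z => h z + conj (g z)) atTop (ball (0 : ℂ) 1))
    (z₀ : ℂ) (hz₀ : z₀ ∈ ball (0 : ℂ) 1) :
    h z₀ + conj (g z₀) = 0 ↔
      ∃ (nk : ℕ → ℕ) (w : ℕ → ℂ), StrictMono nk ∧ (∀ k, w k ∈ ball (0 : ℂ) 1) ∧
        Tendsto w atTop (nhds z₀) ∧ ∀ k, hn (nk k) (w k) + conj (gn (nk k) (w k)) = 0 :=
  stmt12_general hn gn h g hhn hgn hh hg hsp hconv z₀ hz₀
end
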